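/- Fix 1 ≤ k ≤ n. Then ∑_{w∈𝔖ₙ, w(n)=k} ∏_{i=1}^n (1−u_{w(i)})/(1−u_{w(1)}⋯u_{w(i)}) · ∏_{(i,j)∈R(w)} u_j = u_{k+1}⋯uₙ(1−u_k)/(1−u₁⋯uₙ), where the sum is over permutations w with w(n)=k and R(w) is the set of inverted pairs as usual. -/

import Mathlib

open Finset

/-- `R(w) = {(w(j),w(i)) : i < j, w(i) > w(j)}`, the inversion set of `w⁻¹`. -/
def Rset {m : ℕ} (w : Equiv.Perm (Fin m)) : Finset (Fin m × Fin m) :=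
  Finset.univ.filter (fun p => p.1 < p.2 ∧ w.symm p.2 < w.symm p.1)

/-!
A permutation `w` of `Fin (n + 1)` with `w (last n) = k` is `k.succAbove ∘ σ` on the first
`n` positions for a unique `σ ∈ 𝔖ₙ`. Its weight factors as the weight of `σ` in the variables
`u ∘ k.succAbove`, times `(1 - u k) / (1 - u₀⋯uₙ)` from the last position, times
`∏_{i > k} u i` from the pairs `(k, i)`, which all lie in `R(w)`. Summing over `σ` gives the
refined identity once the unrefined one holds for `n` variables; the latter follows by
induction on `n`, because `∑ₖ (∏_{i > k} u i) (1 - u k) = 1 - u₀⋯uₙ` telescopes.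
-/

theorem sum_prod_gt_mul_one_sub {ι R : Type*} [CommRing R] [Fintype ι] [LinearOrder ι]
    (u : ι → R) :
    ∑ k, (∏ i ∈ univ.filter (k < ·), u i) * (1 - u k) = 1 - ∏ i, u i := by
  have h := prod_add_ordered univ u (fun i => 1 - u i)
  simp only [add_sub_cancel, prod_const_one, mul_one] at h
  rw [sum_congr rfl fun k _ => mul_comm _ _]
  linear_combination -h

def insertLast {n : ℕ} (k : Fin (n + 1)) (σ : Equiv.Perm (Fin n)) : Equiv.Perm (Fin (n + 1)) :=
  (finSuccEquivLast.equivCongr (finSuccEquiv' k)).symm σ.optionCongr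

@[simp] lemma insertLast_castSucc {n : ℕ} (k : Fin (n + 1)) (σ : Equiv.Perm (Fin n))
    (i : Fin n) :
    insertLast k σ i.castSucc = k.succAbove (σ i) := by
  simp [insertLast]

@[simp] lemma insertLast_last {n : ℕ} (k : Fin (n + 1)) (σ : Equiv.Perm (Fin n)) :
    insertLast k σ (Fin.last n) = k := by
  simp [insertLast]

@[simp] lemma insertLast_symm_succAbove {n : ℕ} (k : Fin (n + 1)) (σ : Equiv.Perm (Fin n))
    (i : Fin n) : (insertLast k σ).symm (k.succAbove i) = (σ.symm i).castSucc := by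
  rw [Equiv.symm_apply_eq, insertLast_castSucc, Equiv.apply_symm_apply]

@[simp] lemma insertLast_symm_self {n : ℕ} (k : Fin (n + 1)) (σ : Equiv.Perm (Fin n)) :
    (insertLast k σ).symm k = Fin.last n := by
  rw [Equiv.symm_apply_eq, insertLast_last]

lemma insertLast_injective {n : ℕ} (k : Fin (n + 1)) :
    Function.Injective (insertLast (n := n) k) :=
  (Equiv.injective _).comp Equiv.optionCongr_injective

lemma exists_insertLast_eq {n : ℕ} {k : Fin (n + 1)} {w : Equiv.Perm (Fin (n + 1))}
    (hw : w (Fin.last n) = k) : ∃ σ, insertLast k σ = w := by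
  set E := finSuccEquivLast.equivCongr (finSuccEquiv' k) w
  have hE : E none = none := by simp [E, hw]
  refine ⟨Equiv.removeNone E, ?_⟩
  rw [insertLast, map_equiv_removeNone, hE, Equiv.swap_self, ← Equiv.Perm.one_def, one_mul,
    Equiv.symm_apply_apply]

lemma prod_Rset_insertLast {M : Type*} [CommMonoid M] {n : ℕ} (u : Fin (n + 1) → M)
    (k : Fin (n + 1)) (σ : Equiv.Perm (Fin n)) :
    ∏ p ∈ Rset (insertLast k σ), u p.2
      = (∏ i ∈ univ.filter (k < ·), u i) * ∏ q ∈ Rset σ, u (k.succAbove q.2) := by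
  simp only [Rset, prod_filter, Fintype.prod_prod_type, Fin.prod_univ_succAbove _ k]
  simp [Fin.castSucc_lt_last, (Fin.le_last _).not_gt]

lemma prod_filter_le_castSucc {M : Type*} [CommMonoid M] {n : ℕ} (g : Fin (n + 1) → M)
    (i : Fin n) :
    ∏ j ∈ univ.filter (· ≤ i.castSucc), g j = ∏ j ∈ univ.filter (· ≤ i), g j.castSucc := by
  simp [prod_filter, Fin.prod_univ_castSucc, (Fin.castSucc_lt_last i).not_ge]

section

variable {F : Type*} [Field F]

def permWeight {m : ℕ} (u : Fin m → F) (w : Equiv.Perm (Fin m)) : F :=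
  (∏ i, (1 - u (w i)) / (1 - ∏ j ∈ univ.filter (· ≤ i), u (w j))) * ∏ p ∈ Rset w, u p.2

lemma permWeight_insertLast {n : ℕ} (u : Fin (n + 1) → F) (k : Fin (n + 1))
    (σ : Equiv.Perm (Fin n)) :
    permWeight u (insertLast k σ) = permWeight (u ∘ k.succAbove) σ
      * ((∏ i ∈ univ.filter (k < ·), u i) * (1 - u k) / (1 - ∏ i, u i)) := by
  have hlast : ∏ j ∈ univ.filter (· ≤ Fin.last n), u (insertLast k σ j) = ∏ i, u i := by
    rw [filter_true_of_mem fun j _ => Fin.le_last j]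
    exact Equiv.prod_comp _ u
  simp only [permWeight, Fin.prod_univ_castSucc, hlast, prod_filter_le_castSucc,
    prod_Rset_insertLast, insertLast_castSucc, insertLast_last, Function.comp_apply]
  ring

lemma sum_permWeight_filter_last_eq {n : ℕ} (u : Fin (n + 1) → F) (k : Fin (n + 1)) :
      ∑ w ∈ univ.filter (fun w : Equiv.Perm (Fin (n + 1)) => w (Fin.last n) = k),
        permWeight u w
      = (∑ σ, permWeight (u ∘ k.succAbove) σ)
          * ((∏ i ∈ univ.filter (k < ·), u i) * (1 - u k) / (1 - ∏ i, u i)) := by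
  rw [sum_mul]
  refine (sum_nbij (insertLast k) (by simp) (insertLast_injective k).injOn
    (fun w hw => ?_) (fun σ _ => (permWeight_insertLast u k σ).symm)).symm
  obtain ⟨σ, hσ⟩ := exists_insertLast_eq (mem_filter.1 hw).2
  exact ⟨σ, mem_univ σ, hσ⟩

lemma prod_comp_ne_one {ι κ M : Type*} [CommMonoid M] {u : κ → M}
    (hu : ∀ S : Finset κ, S.Nonempty → ∏ i ∈ S, u i ≠ 1) {e : ι → κ}
    (he : Function.Injective e) (S : Finset ι) (hS : S.Nonempty) :
    ∏ i ∈ S, (u ∘ e) i ≠ 1 := by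
  have h := hu (S.map ⟨e, he⟩) hS.map
  rwa [prod_map] at h

theorem sum_permWeight_eq_one {m : ℕ} (u : Fin m → F)
    (hu : ∀ S : Finset (Fin m), S.Nonempty → ∏ i ∈ S, u i ≠ 1) :
    ∑ w, permWeight u w = 1 := by
  induction m with
  | zero => simp [permWeight, Rset]
  | succ n ih =>
    have hP : 1 - ∏ i, u i ≠ 0 := sub_ne_zero.2 (hu univ univ_nonempty).symm
    rw [← sum_fiberwise univ (fun w : Equiv.Perm (Fin (n + 1)) => w (Fin.last n))]
    simp_rw [sum_permWeight_filter_last_eq,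
      ih _ (prod_comp_ne_one hu Fin.succAbove_right_injective), one_mul]
    rw [← sum_div, sum_prod_gt_mul_one_sub, div_self hP]

end

/-- The refinement of the identity `∑_w w(∏ᵢ(1−uᵢ)/(1−u₁⋯uᵢ))·∏_{(i,j)∈R(w)}u_j = 1`
to permutations with prescribed last value `w(n) = k`. -/
theorem perm_sum_fixed_last {F : Type*} [Field F] (n : ℕ) (u : Fin (n + 1) → F)
    (hu : ∀ S : Finset (Fin (n + 1)), S.Nonempty → ∏ i ∈ S, u i ≠ 1)
    (k : Fin (n + 1)) :
    ∑ w ∈ Finset.univ.filter (fun w : Equiv.Perm (Fin (n + 1)) => w (Fin.last n) = k),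
      (∏ i, (1 - u (w i)) / (1 - ∏ j ∈ Finset.univ.filter (· ≤ i), u (w j)))
        * ∏ p ∈ Rset w, u p.2
      = (∏ i ∈ Finset.univ.filter (fun i => k < i), u i) * (1 - u k)
          / (1 - ∏ i, u i) := by
  have h := sum_permWeight_filter_last_eq u k
  rwa [sum_permWeight_eq_one _ (prod_comp_ne_one hu Fin.succAbove_right_injective),
    one_mul] at h
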